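/- The coherence of formation equals the minimal conditional entropy over purifications and measurements: for every d×d density matrix ρ, C_f(ρ) equals the infimum, over all d_E ≥ 1, all purifications ψ : Fin d × Fin d_E → ℂ of ρ, and all orthonormal bases {e_j} of ℂ^{d_E}, of H(P) − H(p), where c_{ij} = Σ_k ψ(i,k)·conj(e_j(k)), P(i,j) = |c_{ij}|², p_j = Σ_i P(i,j), and H denotes base-2 Shannon entropy. -/

import Mathlib

open Matrix Kronecker
open scoped ComplexOrder Classical

/-- Positive semidefinite square root of a matrix (zero if not PSD). -/
noncomputable def matSqrt {n : Type*} [Fintype n] [DecidableEq n] (A : Matrix n n ℂ) :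
    Matrix n n ℂ :=
  if h : A.PosSemidef then
    (h.1.eigenvectorUnitary : Matrix n n ℂ) *
      Matrix.diagonal ((↑) ∘ (Real.sqrt ·) ∘ h.1.eigenvalues) *
      (star (h.1.eigenvectorUnitary : Matrix n n ℂ))
  else 0

/-- Fidelity `F(ρ,σ) = (Tr √(√ρ σ √ρ))²`. -/
noncomputable def fidelity {n : Type*} [Fintype n] [DecidableEq n] (ρ σ : Matrix n n ℂ) : ℝ :=
  ((matSqrt (matSqrt ρ * σ * matSqrt ρ)).trace).re ^ 2

/-- A density matrix: positive semidefinite with trace 1. -/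
def IsDensityMatrix {n : Type*} [Fintype n] [DecidableEq n] (ρ : Matrix n n ℂ) : Prop :=
  ρ.PosSemidef ∧ ρ.trace = 1

/-- Incoherent (diagonal) matrix in the computational basis. -/
def IsIncoherent {n : Type*} [Fintype n] [DecidableEq n] (δ : Matrix n n ℂ) : Prop :=
  ∀ i j, i ≠ j → δ i j = 0

/-- Min-relative entropy `D_min(ρ‖σ) = -log₂ F(ρ,σ)`. -/
noncomputable def Dmin {n : Type*} [Fintype n] [DecidableEq n] (ρ σ : Matrix n n ℂ) : ℝ :=
  - Real.logb 2 (fidelity ρ σ)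

/-- Max-relative entropy `D_max(ρ‖σ) = log₂ inf {λ | λσ - ρ ⪰ 0}`. -/
noncomputable def Dmax {n : Type*} [Fintype n] [DecidableEq n] (ρ σ : Matrix n n ℂ) : ℝ :=
  Real.logb 2 (sInf {l : ℝ | (l • σ - ρ).PosSemidef})

/-- Min-entropy of coherence: infimum of `D_min(ρ‖δ)` over incoherent density matrices `δ`. -/
noncomputable def Cmin {n : Type*} [Fintype n] [DecidableEq n] (ρ : Matrix n n ℂ) : ℝ :=
  sInf {x | ∃ δ, IsDensityMatrix δ ∧ IsIncoherent δ ∧ x = Dmin ρ δ}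

/-- Max-entropy of coherence: infimum of `D_max(ρ‖δ)` over incoherent density matrices `δ`. -/
noncomputable def Cmax {n : Type*} [Fintype n] [DecidableEq n] (ρ : Matrix n n ℂ) : ℝ :=
  sInf {x | ∃ δ, IsDensityMatrix δ ∧ IsIncoherent δ ∧ x = Dmax ρ δ}

/-- Geometric coherence: infimum of `1 - F(ρ,δ)` over incoherent density matrices `δ`. -/
noncomputable def Cg {n : Type*} [Fintype n] [DecidableEq n] (ρ : Matrix n n ℂ) : ℝ :=
  sInf {x | ∃ δ, IsDensityMatrix δ ∧ IsIncoherent δ ∧ x = 1 - fidelity ρ δ}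

/-- `Tr[ρ log₂ ρ] = Σ λᵢ log₂ λᵢ` over the eigenvalues of a Hermitian `ρ`
(with `0·log₂ 0 = 0`, since `Real.logb 2 0 = 0`). -/
noncomputable def trLog2Self {n : Type*} [Fintype n] [DecidableEq n] (ρ : Matrix n n ℂ) : ℝ :=
  if h : ρ.IsHermitian then ∑ i, h.eigenvalues i * Real.logb 2 (h.eigenvalues i) else 0

/-- Von Neumann entropy `S(ρ) = -Σ λᵢ log₂ λᵢ`. -/
noncomputable def vN {n : Type*} [Fintype n] [DecidableEq n] (ρ : Matrix n n ℂ) : ℝ :=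
  - trLog2Self ρ

/-- `log₂ σ` via the spectral functional calculus. -/
noncomputable def matLog2 {n : Type*} [Fintype n] [DecidableEq n] (σ : Matrix n n ℂ) :
    Matrix n n ℂ :=
  if h : σ.IsHermitian then
    (h.eigenvectorUnitary : Matrix n n ℂ) *
      Matrix.diagonal (fun i => (Real.logb 2 (h.eigenvalues i) : ℂ)) *
      (h.eigenvectorUnitary : Matrix n n ℂ)ᴴ
  else 0

/-- Base-2 Shannon entropy of the distribution `i ↦ |ψ(i)|²`,
which equals `S(Δ(|ψ⟩⟨ψ|))` for a unit vector `ψ`. -/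
noncomputable def shannonOfVec {n : Type*} [Fintype n] (ψ : n → ℂ) : ℝ :=
  - ∑ i, ‖ψ i‖ ^ 2 * Real.logb 2 (‖ψ i‖ ^ 2)

/-- Coherence of formation: infimum of the average dephased pure-state entropy
over all finite pure-state ensembles for `ρ`. -/
noncomputable def Cf {d : ℕ} (ρ : Matrix (Fin d) (Fin d) ℂ) : ℝ :=
  sInf {x | ∃ m : ℕ, ∃ p : Fin m → ℝ, ∃ ψ : Fin m → Fin d → ℂ,
    (∀ j, 0 ≤ p j) ∧ (∑ j, p j) = 1 ∧ (∀ j, (∑ i, ‖ψ j i‖ ^ 2) = 1) ∧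
    (∑ j, (p j : ℂ) • Matrix.vecMulVec (ψ j) (fun i => starRingEnd ℂ (ψ j i))) = ρ ∧
    x = ∑ j, p j * shannonOfVec (ψ j)}

/-- The coherence monotone `C₀`: infimum over pure-state ensembles of
`max_j log₂ T_j`, where `T_j` is the number of nonzero coordinates of `ψ_j`. -/
noncomputable def C0 {d : ℕ} (ρ : Matrix (Fin d) (Fin d) ℂ) : ℝ :=
  sInf {x | ∃ m : ℕ, ∃ p : Fin m → ℝ, ∃ ψ : Fin m → Fin d → ℂ,
    (∀ j, 0 < p j) ∧ (∑ j, p j) = 1 ∧ (∀ j, (∑ i, ‖ψ j i‖ ^ 2) = 1) ∧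
    (∑ j, (p j : ℂ) • Matrix.vecMulVec (ψ j) (fun i => starRingEnd ℂ (ψ j i))) = ρ ∧
    x = ⨆ j, Real.logb 2 ((Finset.univ.filter fun i => ψ j i ≠ 0).card)}

/-- `ψ : ℂ^{d_A} ⊗ ℂ^{d_E}` is a purification of `ρ`. -/
def IsPurification {dA dE : ℕ} (ρ : Matrix (Fin dA) (Fin dA) ℂ)
    (ψ : Fin dA × Fin dE → ℂ) : Prop :=
  (∑ x, ‖ψ x‖ ^ 2) = 1 ∧ ∀ i j, (∑ k, ψ (i, k) * starRingEnd ℂ (ψ (j, k))) = ρ i j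

/-- The state `ρ_{X_A E}` obtained from `|ψ⟩⟨ψ|` by dephasing system `A`. -/
noncomputable def dephasedPur {dA dE : ℕ} (ψ : Fin dA × Fin dE → ℂ) :
    Matrix (Fin dA × Fin dE) (Fin dA × Fin dE) ℂ :=
  fun x y => if x.1 = y.1 then ψ x * starRingEnd ℂ (ψ y) else 0

/-- Conditional min-entropy
`H_min(A|E) = -log₂ inf {Tr σ | σ ⪰ 0, I_A ⊗ σ - ρ_{AE} ⪰ 0}`. -/
noncomputable def HminCond {dA dE : ℕ}
    (ρAE : Matrix (Fin dA × Fin dE) (Fin dA × Fin dE) ℂ) : ℝ :=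
  - Real.logb 2 (sInf {x | ∃ σ : Matrix (Fin dE) (Fin dE) ℂ, σ.PosSemidef ∧
      ((1 : Matrix (Fin dA) (Fin dA) ℂ) ⊗ₖ σ - ρAE).PosSemidef ∧ x = σ.trace.re})

/-- Conditional max-entropy
`H_max(A|E) = log₂ sup {F(I_A ⊗ σ, ρ_{AE}) | σ a density matrix}`. -/
noncomputable def HmaxCond {dA dE : ℕ}
    (ρAE : Matrix (Fin dA × Fin dE) (Fin dA × Fin dE) ℂ) : ℝ :=
  Real.logb 2 (sSup {x | ∃ σ : Matrix (Fin dE) (Fin dE) ℂ, IsDensityMatrix σ ∧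
      x = fidelity ((1 : Matrix (Fin dA) (Fin dA) ℂ) ⊗ₖ σ) ρAE})

/-!
A purification `Ψ` (read as a `d × d_E` matrix) together with an orthonormal basis `E` of the
environment gives the factorization `ρ = C Cᴴ` with `C = Ψ Eᴴ`, whose entries are the measured
amplitudes `c i j`; conversely every factorization `ρ = C Cᴴ` arises this way (with `Ψ = C`,
`E = 1`). A factorization is in turn the same thing as a pure-state ensemble: the columns of `C`
are `√p_j ψ_j`. Under this correspondence the chain rule for Shannon entropy,
`H(P) = H(p) + ∑ j, p_j H(|ψ_j|²)`, turns `H(P) - H(p)` into the average entropy of the ensemble,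
so both infima run over the same set of values.
-/

open Finset

/-- The conditional Shannon entropy `H(P) - H(p)` of the joint distribution `P i j = ‖C i j‖ ^ 2`
given its second marginal `p j = ∑ i, P i j`. -/
noncomputable def amplitudeCondEntropy {ι κ : Type*} [Fintype ι] [Fintype κ]
    (C : Matrix ι κ ℂ) : ℝ :=
  (-(∑ i, ∑ j, ‖C i j‖ ^ 2 * Real.logb 2 (‖C i j‖ ^ 2))) -
    (-(∑ j, (∑ i, ‖C i j‖ ^ 2) * Real.logb 2 (∑ i, ‖C i j‖ ^ 2)))

def decompositionEntropies {d : ℕ} (ρ : Matrix (Fin d) (Fin d) ℂ) : Set ℝ :=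
  {x | ∃ m : ℕ, ∃ C : Matrix (Fin d) (Fin m) ℂ, C * Cᴴ = ρ ∧ x = amplitudeCondEntropy C}

lemma mul_logb_mul_eq_add (a b : ℝ) :
    a * b * Real.logb 2 (a * b) = a * b * Real.logb 2 a + a * b * Real.logb 2 b := by
  rcases eq_or_ne a 0 with rfl | ha
  · simp
  rcases eq_or_ne b 0 with rfl | hb
  · simp
  rw [Real.logb_mul ha hb, mul_add]

lemma norm_sqrt_mul_sq {r : ℝ} (hr : 0 ≤ r) (z : ℂ) : ‖(√r : ℂ) * z‖ ^ 2 = r * ‖z‖ ^ 2 := by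
  rw [norm_mul, mul_pow, Complex.norm_real, Real.norm_of_nonneg (Real.sqrt_nonneg r),
    Real.sq_sqrt hr]

section Entropy

variable {ι κ : Type*} [Fintype ι] [Fintype κ]

lemma sum_norm_sq_sqrt_mul {r : ℝ} (hr : 0 ≤ r) {φ : ι → ℂ} (hφ : ∑ i, ‖φ i‖ ^ 2 = 1) :
    ∑ i, ‖(√r : ℂ) * φ i‖ ^ 2 = r := by
  simp_rw [norm_sqrt_mul_sq hr, ← mul_sum, hφ, mul_one]

lemma sum_norm_sq_mul_logb_sqrt_mul {r : ℝ} (hr : 0 ≤ r) {φ : ι → ℂ}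
    (hφ : ∑ i, ‖φ i‖ ^ 2 = 1) :
    ∑ i, ‖(√r : ℂ) * φ i‖ ^ 2 * Real.logb 2 (‖(√r : ℂ) * φ i‖ ^ 2) =
      r * Real.logb 2 r - r * shannonOfVec φ := by
  simp_rw [norm_sqrt_mul_sq hr, mul_logb_mul_eq_add, sum_add_distrib, ← sum_mul, ← mul_sum, hφ,
    shannonOfVec, mul_neg, sub_neg_eq_add, mul_sum, mul_assoc, one_mul]

lemma amplitudeCondEntropy_sqrt_mul {p : κ → ℝ} (hp : ∀ j, 0 ≤ p j) {ψ : κ → ι → ℂ}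
    (hψ : ∀ j, ∑ i, ‖ψ j i‖ ^ 2 = 1) :
    amplitudeCondEntropy (Matrix.of fun i j => (√(p j) : ℂ) * ψ j i) =
      ∑ j, p j * shannonOfVec (ψ j) := by
  simp only [amplitudeCondEntropy, Matrix.of_apply]
  rw [sum_comm]
  simp_rw [sum_norm_sq_mul_logb_sqrt_mul (hp _) (hψ _), sum_norm_sq_sqrt_mul (hp _) (hψ _),
    sum_sub_distrib]
  ring

lemma exists_eq_sqrt_mul_unit [Nonempty ι] (v : ι → ℂ) :
    ∃ φ : ι → ℂ, ∑ i, ‖φ i‖ ^ 2 = 1 ∧ ∀ i, v i = (√(∑ i, ‖v i‖ ^ 2) : ℂ) * φ i := by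
  set s := ∑ i, ‖v i‖ ^ 2
  have hs : 0 ≤ s := by positivity
  rcases hs.eq_or_lt with hs0 | hspos
  · have hv : ∀ i, v i = 0 := fun i => by
      simpa using (sum_eq_zero_iff_of_nonneg fun i _ => sq_nonneg ‖v i‖).mp hs0.symm i
    refine ⟨Pi.single (Classical.arbitrary ι) 1, ?_, fun i => by simp [hv, ← hs0]⟩
    rw [sum_eq_single (Classical.arbitrary ι) (fun i _ hi => by simp [hi]) (by simp)]
    simp
  · have hsqrt : (√s : ℂ) ≠ 0 := by exact_mod_cast (Real.sqrt_pos.mpr hspos).ne'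
    refine ⟨fun i => v i / √s, ?_, fun i => by field_simp⟩
    simp_rw [norm_div, div_pow, Complex.norm_real, Real.norm_of_nonneg (Real.sqrt_nonneg s),
      Real.sq_sqrt hs, ← sum_div]
    exact div_self hspos.ne'

end Entropy

lemma sum_smul_vecMulVec_eq_mul_conjTranspose {ι κ : Type*} [Fintype κ] {p : κ → ℝ}
    (hp : ∀ j, 0 ≤ p j) (ψ : κ → ι → ℂ) :
    ∑ j, (p j : ℂ) • vecMulVec (ψ j) (fun i => starRingEnd ℂ (ψ j i)) =
      Matrix.of (fun i j => (√(p j) : ℂ) * ψ j i) *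
        (Matrix.of fun i j => (√(p j) : ℂ) * ψ j i)ᴴ := by
  ext i i'
  simp only [Matrix.sum_apply, Matrix.smul_apply, vecMulVec_apply, smul_eq_mul, mul_apply,
    conjTranspose_apply, Matrix.of_apply, star_mul', Complex.star_def, Complex.conj_ofReal]
  refine sum_congr rfl fun j _ => ?_
  have hsq : (√(p j) : ℂ) * √(p j) = p j := by
    rw [← Complex.ofReal_mul, Real.mul_self_sqrt (hp j)]
  linear_combination (-(ψ j i * starRingEnd ℂ (ψ j i'))) * hsq

lemma sum_sum_norm_sq_eq_one {d m : Type*} [Fintype d] [Fintype m] {ρ : Matrix d d ℂ}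
    {C : Matrix d m ℂ} (hC : C * Cᴴ = ρ) (hρ : ρ.trace = 1) : ∑ i, ∑ j, ‖C i j‖ ^ 2 = 1 := by
  have htr : ((∑ i, ∑ j, ‖C i j‖ ^ 2 : ℝ) : ℂ) = ρ.trace := by
    simp only [← hC, trace, diag_apply, mul_apply, conjTranspose_apply, Complex.ofReal_sum,
      Complex.ofReal_pow, ← Complex.mul_conj', Complex.star_def]
  exact_mod_cast htr.trans hρ

lemma orthonormal_iff_mul_conjTranspose_eq_one {n : Type*} [Fintype n] [DecidableEq n]
    {E : Matrix n n ℂ} :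
    (∀ j j', (∑ k, E j k * starRingEnd ℂ (E j' k)) = if j = j' then 1 else 0) ↔ E * Eᴴ = 1 := by
  simp only [← Matrix.ext_iff, mul_apply, conjTranspose_apply, one_apply, Complex.star_def]

lemma isPurification_of_mul_conjTranspose_eq {dA dE : ℕ} {ρ : Matrix (Fin dA) (Fin dA) ℂ}
    {C : Matrix (Fin dA) (Fin dE) ℂ} (hC : C * Cᴴ = ρ) (hnorm : ∑ i, ∑ j, ‖C i j‖ ^ 2 = 1) :
    IsPurification ρ fun x => C x.1 x.2 := by
  refine ⟨by rwa [Fintype.sum_prod_type], fun i j => ?_⟩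
  simp [← hC, mul_apply]

lemma IsPurification.mul_conjTranspose_eq_of_mul_conjTranspose_eq_one {dA dE : ℕ}
    {ρ : Matrix (Fin dA) (Fin dA) ℂ} {ψ : Fin dA × Fin dE → ℂ} (hψ : IsPurification ρ ψ)
    {E : Matrix (Fin dE) (Fin dE) ℂ} (hE : E * Eᴴ = 1) :
    (Matrix.of (fun i k => ψ (i, k)) * Eᴴ) * (Matrix.of (fun i k => ψ (i, k)) * Eᴴ)ᴴ = ρ := by
  have hEE : Eᴴ * E = 1 := mul_eq_one_comm.mp hE
  rw [conjTranspose_mul, conjTranspose_conjTranspose, Matrix.mul_assoc, ← Matrix.mul_assoc Eᴴ,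
    hEE, Matrix.one_mul]
  ext i j
  simp [mul_apply, ← hψ.2 i j]

lemma Cf_eq_sInf_decompositionEntropies {d : ℕ} {ρ : Matrix (Fin d) (Fin d) ℂ}
    (hρ : ρ.trace = 1) : Cf ρ = sInf (decompositionEntropies ρ) := by
  unfold Cf
  congr 1
  ext x
  constructor
  · rintro ⟨m, p, ψ, hp, -, hψ, hρψ, rfl⟩
    exact ⟨m, _, (sum_smul_vecMulVec_eq_mul_conjTranspose hp ψ).symm.trans hρψ,
      (amplitudeCondEntropy_sqrt_mul hp hψ).symm⟩
  · rintro ⟨m, C, hC, rfl⟩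
    have hnorm := sum_sum_norm_sq_eq_one hC hρ
    have : Nonempty (Fin d) := by
      by_contra h
      simp [not_nonempty_iff.mp h] at hnorm
    choose ψ hψ hCψ using fun j => exists_eq_sqrt_mul_unit fun i => C i j
    have hp : ∀ j, 0 ≤ ∑ i, ‖C i j‖ ^ 2 := fun j => by positivity
    have hCeq : C = Matrix.of fun i j => (√(∑ i, ‖C i j‖ ^ 2) : ℂ) * ψ j i := by
      ext i j
      exact hCψ j i
    refine ⟨m, _, ψ, hp, by rwa [sum_comm], hψ, ?_, ?_⟩
    · rw [sum_smul_vecMulVec_eq_mul_conjTranspose hp, ← hCeq, hC]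
    · conv_lhs => rw [hCeq]
      exact amplitudeCondEntropy_sqrt_mul hp hψ

/-- the coherence of formation equals the minimal conditional
entropy `H(P) - H(p)` over all purifications and all orthonormal measurement
bases on the purifying system. -/
theorem stmt16 {d : ℕ} (ρ : Matrix (Fin d) (Fin d) ℂ) (hρ : IsDensityMatrix ρ) :
    Cf ρ = sInf {x | ∃ dE : ℕ, 1 ≤ dE ∧ ∃ ψ : Fin d × Fin dE → ℂ, IsPurification ρ ψ ∧
      ∃ e : Fin dE → Fin dE → ℂ,
        (∀ j j', (∑ k, e j k * starRingEnd ℂ (e j' k)) = if j = j' then 1 else 0) ∧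
        x = (-(∑ i, ∑ j, ‖∑ k, ψ (i, k) * starRingEnd ℂ (e j k)‖ ^ 2 *
                Real.logb 2 (‖∑ k, ψ (i, k) * starRingEnd ℂ (e j k)‖ ^ 2))) -
            (-(∑ j, (∑ i, ‖∑ k, ψ (i, k) * starRingEnd ℂ (e j k)‖ ^ 2) *
                Real.logb 2 (∑ i, ‖∑ k, ψ (i, k) * starRingEnd ℂ (e j k)‖ ^ 2)))} := by
  rw [Cf_eq_sInf_decompositionEntropies hρ.2]
  congr 1
  ext x
  constructor
  · rintro ⟨m, C, hC, rfl⟩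
    have hnorm := sum_sum_norm_sq_eq_one hC hρ.2
    have hm : 1 ≤ m := Nat.one_le_iff_ne_zero.mpr fun hm => by subst hm; simp at hnorm
    refine ⟨m, hm, fun x => C x.1 x.2, isPurification_of_mul_conjTranspose_eq hC hnorm,
      (1 : Matrix (Fin m) (Fin m) ℂ), orthonormal_iff_mul_conjTranspose_eq_one.mpr (by simp), ?_⟩
    conv_lhs => rw [← Matrix.mul_one C, ← conjTranspose_one]
    rfl
  · rintro ⟨dE, -, ψ, hψ, e, he, rfl⟩
    -- the measured amplitudes `∑ k, ψ (i, k) * conj (e j k)` are the entries of `Ψ * Eᴴ`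
    exact ⟨dE, _, (hψ.mul_conjTranspose_eq_of_mul_conjTranspose_eq_one
      (orthonormal_iff_mul_conjTranspose_eq_one.mp he)), rfl⟩
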